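/- Let ψ and ψ' be finite-horizon choice functions with the same set of leaf paths such that ψ subsumes ψ'. If ψ' is π-consistent and monotonic and u = V^π, then the root values of ψ satisfy V^ψ_u(s) ≥ V^π(s) for all states s. -/
import Mathlib


open Finset

/-- A finite Markov Decision Process with transition kernel `P` and reward `R`. -/
structure MDP (S A : Type) [Fintype S] where
  P : S → A → S → ℝ
  R : S → A → ℝ
  P_nonneg : ∀ s a s', 0 ≤ P s a s'
  P_sum : ∀ s a, ∑ s', P s a s' = 1

/-- A state path: a root state followed by an alternating list of actions and states. -/
abbrev SPath (S A : Type) := S × List (A × S)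

variable {S A : Type}

/-- The current (last) state of a path. -/
def curS (p : SPath S A) : S := (p.2.getLast?.map Prod.snd).getD p.1

/-- Extend a path by an action and a successor state. -/
def extP (p : SPath S A) (a : A) (s' : S) : SPath S A := (p.1, p.2 ++ [(a, s')])

/-- Remove the first state-action pair of a path (identity on length-0 paths). -/
def dropFirst (p : SPath S A) : SPath S A :=
  match p with
  | (s₀, []) => (s₀, [])
  | (_, (_, s₁) :: rest) => (s₁, rest)

/-- The length-zero path consisting of a single root state. -/
def rootP (s : S) : SPath S A := (s, ([] : List (A × S)))

/-- `p` is ψ-satisfying: every action along the path is allowed by ψ at the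
corresponding prefix. -/
def SatCF (ψ : SPath S A → Finset A) (p : SPath S A) : Prop :=
  ∀ n (h : n < p.2.length), (p.2.get ⟨n, h⟩).1 ∈ ψ (p.1, p.2.take n)

/-- ψ is π-consistent: π's action is allowed at every non-leaf node. -/
def ConsistentCF (ψ : SPath S A → Finset A) (π : S → A) : Prop :=
  ∀ p, (ψ p).Nonempty → π (curS p) ∈ ψ p

/-- ψ is monotonic: `ψ(p;s) ⊆ ψ(⌟p;s)`. -/
def MonoCF (ψ : SPath S A → Finset A) : Prop :=
  ∀ p : SPath S A, ψ p ⊆ ψ (dropFirst p)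

/-- ψ has horizon at most H: every ψ-satisfying path of length ≥ H is a leaf. -/
def HorizonLE (ψ : SPath S A → Finset A) (H : ℕ) : Prop :=
  ∀ p : SPath S A, SatCF ψ p → H ≤ p.2.length → ψ p = ∅

/-- every leaf path of ψ has length at least h (min-horizon lower bound). -/
def MinLeaf (ψ : SPath S A → Finset A) (h : ℕ) : Prop :=
  ∀ p : SPath S A, SatCF ψ p → ψ p = ∅ → h ≤ p.2.length

variable [Fintype S] [Fintype A]

/-- Tree value with explicit fuel (remaining depth). -/
noncomputable def treeVal (M : MDP S A) (γ : ℝ) (ψ : SPath S A → Finset A)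
    (u : S → ℝ) : ℕ → SPath S A → ℝ
  | 0, p => u (curS p)
  | n + 1, p =>
      if h : (ψ p).Nonempty then
        (ψ p).sup' h fun a =>
          M.R (curS p) a + γ * ∑ s', M.P (curS p) a s' * treeVal M γ ψ u n (extP p a s')
      else u (curS p)

/-- `V^ψ_u(p;s)` for a choice function ψ of horizon H. -/
noncomputable def Vt (M : MDP S A) (γ : ℝ) (ψ : SPath S A → Finset A)
    (u : S → ℝ) (H : ℕ) (p : SPath S A) : ℝ :=
  treeVal M γ ψ u (H - p.2.length) p

/-- `Q^ψ_u(s;a)` at a root node. -/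
noncomputable def QrootCF (M : MDP S A) (γ : ℝ) (ψ : SPath S A → Finset A)
    (u : S → ℝ) (H : ℕ) (s : S) (a : A) : ℝ :=
  M.R s a + γ * ∑ s', M.P s a s' * Vt M γ ψ u H (extP (rootP s) a s')

/-- π' is a greedy root policy for the search tree of ψ with leaf evaluation u. -/
def IsGreedy (M : MDP S A) (γ : ℝ) (ψ : SPath S A → Finset A)
    (u : S → ℝ) (H : ℕ) (π' : S → A) : Prop :=
  ∀ s, π' s ∈ ψ (rootP s) ∧
    ∀ a ∈ ψ (rootP s), QrootCF M γ ψ u H s a ≤ QrootCF M γ ψ u H s (π' s)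

/-- `V` is the value function of the stationary policy π. -/
def IsValue (M : MDP S A) (γ : ℝ) (π : S → A) (V : S → ℝ) : Prop :=
  ∀ s, V s = M.R s (π s) + γ * ∑ s', M.P s (π s) s' * V s'

/-- Policy-restricted Bellman backup `B_π[V](s)`. -/
noncomputable def Bpol (M : MDP S A) (γ : ℝ) (π : S → A) (V : S → ℝ) (s : S) : ℝ :=
  M.R s (π s) + γ * ∑ s', M.P s (π s) s' * V s'

lemma curS_extP (p : SPath S A) (a : A) (s' : S) : curS (extP p a s') = s' := by
  simp [curS, extP]

lemma satCF_extP {ψ : SPath S A → Finset A} {p : SPath S A} {a : A} (s' : S)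
    (hp : SatCF ψ p) (ha : a ∈ ψ p) : SatCF ψ (extP p a s') := by
  intro n h
  simp only [extP, List.length_append, List.length_singleton] at h
  rcases lt_or_eq_of_le (Nat.lt_succ_iff.mp h) with h' | h'
  · have := hp n h'
    simpa [extP, List.get_eq_getElem, List.getElem_append_left h',
      List.take_append_of_le_length (le_of_lt h')] using this
  · subst h'
    simpa [extP, List.get_eq_getElem, List.getElem_append_right (le_refl p.2.length),
      List.take_left] using ha

lemma satCF_mono {ψ ψ' : SPath S A → Finset A} (hsub : ∀ p, ψ' p ⊆ ψ p)
    {p : SPath S A} (hp : SatCF ψ' p) : SatCF ψ p := fun n h => hsub _ (hp n h)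

lemma treeVal_lower (M : MDP S A) (γ : ℝ) (hγ0 : 0 ≤ γ)
    (π : S → A) (Vpi : S → ℝ) (hVpi : IsValue M γ π Vpi)
    (ψ' : SPath S A → Finset A) (hcons : ConsistentCF ψ' π) :
    ∀ n (p : SPath S A), SatCF ψ' p → Vpi (curS p) ≤ treeVal M γ ψ' Vpi n p := by
  intro n
  induction n with
  | zero => intro p _; simp [treeVal]
  | succ n ih =>
    intro p hp
    by_cases h : (ψ' p).Nonempty
    · rw [treeVal, dif_pos h]
      have hπ : π (curS p) ∈ ψ' p := hcons p h
      refine le_trans ?_ (Finset.le_sup' _ hπ)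
      rw [hVpi (curS p)]
      gcongr with s' _
      · exact M.P_nonneg _ _ _
      · have := ih (extP p (π (curS p)) s') (satCF_extP s' hp hπ)
        rwa [curS_extP] at this
    · rw [treeVal, dif_neg h]

lemma treeVal_cmp (M : MDP S A) (γ : ℝ) (hγ0 : 0 ≤ γ) (Vpi : S → ℝ)
    (ψ ψ' : SPath S A → Finset A)
    (hleaf : ∀ p : SPath S A, (SatCF ψ p ∧ ψ p = ∅) ↔ (SatCF ψ' p ∧ ψ' p = ∅))
    (hsub : ∀ p : SPath S A, ψ' p ⊆ ψ p) :
    ∀ n (p : SPath S A), SatCF ψ' p →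
      treeVal M γ ψ' Vpi n p ≤ treeVal M γ ψ Vpi n p := by
  intro n
  induction n with
  | zero => intro p _; simp [treeVal]
  | succ n ih =>
    intro p hp
    by_cases h : (ψ' p).Nonempty
    · have hψ : (ψ p).Nonempty := h.mono (hsub p)
      rw [treeVal, dif_pos h, treeVal, dif_pos hψ]
      refine Finset.sup'_le _ _ fun a ha => ?_
      refine le_trans ?_ (Finset.le_sup' _ (hsub p ha))
      gcongr with s' _
      · exact M.P_nonneg _ _ _
      · exact ih (extP p a s') (satCF_extP s' hp ha)
    · have h' : ψ' p = ∅ := Finset.not_nonempty_iff_eq_empty.mp h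
      have hψ : ψ p = ∅ := ((hleaf p).mpr ⟨hp, h'⟩).2
      rw [treeVal, dif_neg h, treeVal, dif_neg (by simp [hψ])]

/-- If ψ subsumes a π-consistent monotonic ψ' with the same leaf paths, then
with `u = V^π` the root values of ψ dominate `V^π`. -/
theorem stmt_19 {S A : Type} [Fintype S] [Fintype A]
    (M : MDP S A) (γ : ℝ) (hγ0 : 0 ≤ γ) (hγ1 : γ < 1)
    (π : S → A) (Vpi : S → ℝ) (hVpi : IsValue M γ π Vpi)
    (ψ ψ' : SPath S A → Finset A) (H : ℕ)
    (hfin : HorizonLE ψ H) (hfin' : HorizonLE ψ' H)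
    (hleaf : ∀ p : SPath S A, (SatCF ψ p ∧ ψ p = ∅) ↔ (SatCF ψ' p ∧ ψ' p = ∅))
    (hsub : ∀ p : SPath S A, ψ' p ⊆ ψ p)
    (hcons : ConsistentCF ψ' π) (hmono : MonoCF ψ') :
    ∀ s : S, Vpi s ≤ Vt M γ ψ Vpi H (rootP s) := by
  intro s
  have hsat : SatCF ψ' (rootP s) := fun n h => by simp [rootP] at h
  have h1 := treeVal_lower M γ hγ0 π Vpi hVpi ψ' hcons H (rootP s) hsat
  have h2 := treeVal_cmp M γ hγ0 Vpi ψ ψ' hleaf hsub H (rootP s) hsat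
  have : curS (rootP s : SPath S A) = s := by simp [curS, rootP]
  rw [this] at h1
  calc Vpi s ≤ treeVal M γ ψ' Vpi H (rootP s) := h1
    _ ≤ treeVal M γ ψ Vpi H (rootP s) := h2
    _ = Vt M γ ψ Vpi H (rootP s) := by simp [Vt, rootP]
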